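/- For every integer n ≥ 4, the maximum number of fixed points of an alternating permutation of [n] is ⌈n/2⌉; that is, every alternating permutation of [n] has at most ⌈n/2⌉ fixed points, and there exists an alternating permutation of [n] with exactly ⌈n/2⌉ fixed points. -/

import Mathlib

/-- `π` is an alternating permutation: `π 1 > π 2 < π 3 > π 4 < ⋯`
(here stated with 0-indexed positions). -/
def IsAlternating {n : ℕ} (π : Equiv.Perm (Fin n)) : Prop :=
  ∀ i : ℕ, ∀ h : i + 1 < n,
    if i % 2 = 0 then π ⟨i + 1, h⟩ < π ⟨i, Nat.lt_of_succ_lt h⟩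
    else π ⟨i, Nat.lt_of_succ_lt h⟩ < π ⟨i + 1, h⟩

/-- `π` is a reverse alternating permutation: `π 1 < π 2 > π 3 < π 4 > ⋯`
(here stated with 0-indexed positions). -/
def IsRevAlternating {n : ℕ} (π : Equiv.Perm (Fin n)) : Prop :=
  ∀ i : ℕ, ∀ h : i + 1 < n,
    if i % 2 = 0 then π ⟨i, Nat.lt_of_succ_lt h⟩ < π ⟨i + 1, h⟩
    else π ⟨i + 1, h⟩ < π ⟨i, Nat.lt_of_succ_lt h⟩

/-- The number of fixed points of a permutation of `Fin n`. -/
def fixedPointCount {n : ℕ} (π : Equiv.Perm (Fin n)) : ℕ :=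
  (Finset.univ.filter fun i => π i = i).card

/- ### Auxiliary definitions and lemmas -/

/-- Forward map of the extremal alternating permutation (on `ℕ`). -/
def altF (n j : ℕ) : ℕ :=
  if j = 0 then (if n % 2 = 0 then n - 1 else n - 2)
  else if j = 1 then 1
  else if j = 3 then 0
  else if j % 2 = 1 then j - 2
  else j

/-- Inverse map of `altF`. -/
def altG (n j : ℕ) : ℕ :=
  if j = (if n % 2 = 0 then n - 1 else n - 2) then 0
  else if j = 1 then 1
  else if j = 0 then 3
  else if j % 2 = 1 then j + 2
  else j

lemma altF_lt (n : ℕ) (hn : 4 ≤ n) (j : ℕ) (hj : j < n) : altF n j < n := by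
  unfold altF; split_ifs <;> omega

lemma altG_lt (n : ℕ) (hn : 4 ≤ n) (j : ℕ) (hj : j < n) : altG n j < n := by
  unfold altG; split_ifs <;> omega

set_option maxHeartbeats 1000000 in
lemma altG_altF (n : ℕ) (hn : 4 ≤ n) (j : ℕ) (hj : j < n) : altG n (altF n j) = j := by
  unfold altF altG
  split_ifs <;> first | omega | exact ‹False›.elim

set_option maxHeartbeats 1000000 in
lemma altF_altG (n : ℕ) (hn : 4 ≤ n) (j : ℕ) (hj : j < n) : altF n (altG n j) = j := by
  unfold altF altG
  split_ifs <;> first | omega | exact ‹False›.elim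

/-- The extremal alternating permutation as an `Equiv.Perm (Fin n)`. -/
def altPerm (n : ℕ) (hn : 4 ≤ n) : Equiv.Perm (Fin n) where
  toFun i := ⟨altF n i.val, altF_lt n hn i.val i.isLt⟩
  invFun i := ⟨altG n i.val, altG_lt n hn i.val i.isLt⟩
  left_inv i := by ext; exact altG_altF n hn i.val i.isLt
  right_inv i := by ext; exact altF_altG n hn i.val i.isLt

set_option maxHeartbeats 1000000 in
lemma altPerm_isAlternating (n : ℕ) (hn : 4 ≤ n) : IsAlternating (altPerm n hn) := by
  intro i h
  split_ifs with hi <;>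
  · simp only [Fin.lt_def, altPerm, Equiv.coe_fn_mk]
    unfold altF
    split_ifs <;> first | omega | exact ‹False›.elim

lemma fixed_count_aux (n : ℕ) (hn : 4 ≤ n) :
    ((Finset.range n).filter fun j => j = 1 ∨ j = 2 ∨ (4 ≤ j ∧ j % 2 = 0)).card
      = (n + 1) / 2 := by
  induction n, hn using Nat.le_induction with
  | base => decide
  | succ n hn ih =>
    rw [Finset.range_add_one, Finset.filter_insert]
    split_ifs with h
    · rw [Finset.card_insert_of_notMem (by simp), ih]
      omega
    · rw [ih]
      push_neg at h
      omega

lemma card_filter_fin (n : ℕ) (p : ℕ → Prop) [DecidablePred p] :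
    (Finset.univ.filter fun i : Fin n => p i.val).card
      = ((Finset.range n).filter p).card := by
  rw [Finset.card_filter, Finset.card_filter,
    Fin.sum_univ_eq_sum_range (fun j => if p j then 1 else 0) n]

/-- Two fixed points cannot share a pair `{2k, 2k+1}`. -/
lemma pair_aux {n : ℕ} (π : Equiv.Perm (Fin n)) (hA : IsAlternating π)
    (i j : Fin n) (hi : π i = i) (hj : π j = j) (hlt : i.val < j.val)
    (hdiv : i.val / 2 = j.val / 2) : False := by
  have h1 : j.val = i.val + 1 := by omega
  have h2 : i.val % 2 = 0 := by omega
  have hlt' : i.val + 1 < n := h1 ▸ j.isLt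
  have := hA i.val hlt'
  rw [if_pos h2] at this
  have e1 : (⟨i.val + 1, hlt'⟩ : Fin n) = j := Fin.ext h1.symm
  have e2 : (⟨i.val, Nat.lt_of_succ_lt hlt'⟩ : Fin n) = i := by ext; rfl
  rw [e1, e2, hi, hj, Fin.lt_def] at this
  omega

theorem max_fixed_points_alternating (n : ℕ) (hn : 4 ≤ n) :
    (∀ π : Equiv.Perm (Fin n), IsAlternating π → fixedPointCount π ≤ (n + 1) / 2) ∧
    ∃ π : Equiv.Perm (Fin n), IsAlternating π ∧ fixedPointCount π = (n + 1) / 2 := by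
  constructor
  · intro π hA
    have := Finset.card_le_card_of_injOn (f := fun i : Fin n => i.val / 2)
      (s := Finset.univ.filter fun i => π i = i) (t := Finset.range ((n + 1) / 2))
      (fun i _ => by
        have hi := i.isLt
        simp only [Finset.mem_coe, Finset.mem_range]
        omega)
      (by
        intro i hi j hj hij
        simp only [Finset.mem_coe, Finset.mem_filter] at hi hj
        by_contra hne
        rcases Nat.lt_trichotomy i.val j.val with h | h | h
        · exact pair_aux π hA i j hi.2 hj.2 h hij
        · exact hne (Fin.ext h)
        · exact pair_aux π hA j i hj.2 hi.2 h hij.symm)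
    simpa [fixedPointCount] using this
  · refine ⟨altPerm n hn, altPerm_isAlternating n hn, ?_⟩
    have hset : (Finset.univ.filter fun i : Fin n => altPerm n hn i = i)
        = Finset.univ.filter fun i : Fin n =>
            i.val = 1 ∨ i.val = 2 ∨ (4 ≤ i.val ∧ i.val % 2 = 0) := by
      apply Finset.filter_congr
      intro i _
      have hi := i.isLt
      simp only [altPerm, Equiv.coe_fn_mk, Fin.ext_iff]
      show altF n i.val = i.val ↔ _
      unfold altF
      split_ifs <;> omega
    rw [fixedPointCount, hset, Finset.card_filter,
      Fin.sum_univ_eq_sum_range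
        (fun j => if (j = 1 ∨ j = 2 ∨ (4 ≤ j ∧ j % 2 = 0)) then 1 else 0) n,
      ← Finset.card_filter]
    exact fixed_count_aux n hn
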